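/- Suppose the semi-infinite program min_{w∈W} J(w) subject to g(w,x) ≤ 0 for all x ∈ X is strictly feasible, i.e., there exists w̄ ∈ W with sup_{x∈X} g(w̄,x) < 0, where g(·,x) is convex for each x and g is continuous, W compact convex, X compact. Then for every ε > 0 and every feasible point w of the ε-relaxed problem, there exists a point w_ε on the segment [w̄, w] that is feasible for the strict problem and satisfies ‖w_ε − w‖ ≤ (ε/(ε + s))·diam(W), where s = −sup_{x∈X} g(w̄,x) > 0. -/
import Mathlib


/-- Under strict feasibility of the SIP, every `ε`-feasible point `w` can be moved
along the segment to the Slater point `w̄` to obtain a strictly feasible point `w_ε`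
with `‖w_ε − w‖ ≤ (ε/(ε + s))·diam(W)`, where `s = −sup_{x∈X} g(w̄,x) > 0`. -/
theorem stmt17 {d m : ℕ}
    (W : Set (EuclideanSpace ℝ (Fin m))) (hWc : IsCompact W) (hWconv : Convex ℝ W)
    (X : Set (Fin d → ℝ)) (hXc : IsCompact X) (hXne : X.Nonempty)
    (g : EuclideanSpace ℝ (Fin m) → (Fin d → ℝ) → ℝ)
    (hgcont : Continuous (fun p : EuclideanSpace ℝ (Fin m) × (Fin d → ℝ) => g p.1 p.2))
    (hgconv : ∀ x ∈ X, ConvexOn ℝ W (fun w => g w x))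
    (wbar : EuclideanSpace ℝ (Fin m)) (hwbar : wbar ∈ W)
    (hslater : sSup ((fun x => g wbar x) '' X) < 0)
    (ε : ℝ) (hε : 0 < ε)
    (w : EuclideanSpace ℝ (Fin m)) (hw : w ∈ W)
    (hwfeas : ∀ x ∈ X, g w x ≤ ε) :
    ∃ t ∈ Set.Icc (0 : ℝ) 1,
      (∀ x ∈ X, g (t • wbar + (1 - t) • w) x ≤ 0) ∧
        ‖(t • wbar + (1 - t) • w) - w‖ ≤
          (ε / (ε + (-(sSup ((fun x => g wbar x) '' X))))) * Metric.diam W := by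
  set S := sSup ((fun x => g wbar x) '' X) with hS
  have hcont : Continuous fun x : Fin d → ℝ => g wbar x :=
    hgcont.comp (continuous_const.prodMk continuous_id)
  have hbdd : BddAbove ((fun x => g wbar x) '' X) :=
    (hXc.image hcont).bddAbove
  have hle : ∀ x ∈ X, g wbar x ≤ S := fun x hx =>
    le_csSup hbdd ⟨x, hx, rfl⟩
  have hd : 0 < ε + -S := by linarith
  set t := ε / (ε + -S) with ht
  have ht0 : 0 ≤ t := le_of_lt (div_pos hε hd)
  have ht1 : t ≤ 1 := by
    rw [ht, div_le_one hd]; linarith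
  refine ⟨t, ⟨ht0, ht1⟩, ?_, ?_⟩
  · intro x hx
    have hconv := (hgconv x hx).2 hwbar hw (show (0:ℝ) ≤ t from ht0) (show (0:ℝ) ≤ 1 - t by linarith) (show t + (1 - t) = 1 by ring)
    have h1 : t * g wbar x ≤ t * S := mul_le_mul_of_nonneg_left (hle x hx) ht0
    have h2 : (1 - t) * g w x ≤ (1 - t) * ε :=
      mul_le_mul_of_nonneg_left (hwfeas x hx) (by linarith)
    have hkey0 : t * (ε + -S) = ε := div_mul_cancel₀ ε hd.ne'
    have key : t * S + (1 - t) * ε = 0 := by linear_combination -hkey0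
    calc g (t • wbar + (1 - t) • w) x ≤ t * g wbar x + (1 - t) * g w x := hconv
      _ ≤ t * S + (1 - t) * ε := add_le_add h1 h2
      _ = 0 := key
  · have heq : (t • wbar + (1 - t) • w) - w = t • (wbar - w) := by
      module
    rw [heq, norm_smul, Real.norm_of_nonneg ht0]
    have : ‖wbar - w‖ ≤ Metric.diam W := by
      rw [← dist_eq_norm]
      exact Metric.dist_le_diam_of_mem hWc.isBounded hwbar hw
    exact mul_le_mul_of_nonneg_left this ht0
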